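/- Let z = u.v (concatenation) where z, u and v are admissible words, with v of length at least 2. Let v' be the word obtained from v by one application of the substitution (replacing the first two letters v_1 v_2 of v by max(v_1, v_2) + 1 if v_1 − 1 ≤ v_2 ≤ v_1 + 1, and by v_2 otherwise). Then the word z' = u.v' is admissible. -/

import Mathlib

/-- Admissible words on ℕ. -/
def Admissible : List ℕ → Prop
  | [] => True
  | [_] => True
  | a :: b :: t =>
      a - 1 ≤ b ∧ Admissible ((if a - 1 ≤ b ∧ b ≤ a + 1 then max a b + 1 else b) :: t)
termination_by l => l.length

/-- One application of the substitution on the first two letters of a word. -/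
def stepWord : List ℕ → List ℕ
  | a :: b :: t => (if a - 1 ≤ b ∧ b ≤ a + 1 then max a b + 1 else b) :: t
  | l => l

/-!
Write `a ⋆ b` for `fuse a b`, the letter replacing `a b`. Reducing a nonempty `u` from the left
leaves a single letter `a`, so it suffices to treat `u = [a]`. The word `a :: b :: c :: t`
reduces to `(a ⋆ b) ⋆ c :: t`, the word `a :: (b ⋆ c) :: t` to `a ⋆ (b ⋆ c) :: t`, and a case
analysis gives `a ⋆ (b ⋆ c) ≤ (a ⋆ b) ⋆ c`. Lowering the head letter preserves admissibility.
-/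

def fuse (a b : ℕ) : ℕ := if a - 1 ≤ b ∧ b ≤ a + 1 then max a b + 1 else b

lemma admissible_cons_cons_iff (a b : ℕ) (t : List ℕ) :
    Admissible (a :: b :: t) ↔ a - 1 ≤ b ∧ Admissible (fuse a b :: t) := by
  rw [Admissible, fuse]

lemma le_fuse (a b : ℕ) : b ≤ fuse a b := by
  unfold fuse
  split_ifs <;> omega

lemma fuse_le_fuse_left {m n c : ℕ} (hmn : m ≤ n) (hn : n - 1 ≤ c) : fuse m c ≤ fuse n c := by
  simp only [fuse, Nat.max_def]
  split_ifs <;> omega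

lemma Admissible.of_cons_of_le {m n : ℕ} {t : List ℕ} (h : Admissible (n :: t)) (hmn : m ≤ n) :
    Admissible (m :: t) := by
  induction t generalizing m n with
  | nil => simp [Admissible]
  | cons c t ih =>
    rw [admissible_cons_cons_iff] at h ⊢
    exact ⟨by omega, ih h.2 (fuse_le_fuse_left hmn h.1)⟩

lemma sub_one_le_fuse {a b c : ℕ} (hab : a - 1 ≤ b) (habc : fuse a b - 1 ≤ c) :
    a - 1 ≤ fuse b c := by
  simp only [fuse, Nat.max_def] at habc ⊢
  split_ifs at habc ⊢ <;> omega

lemma fuse_fuse_le {a b c : ℕ} (hab : a - 1 ≤ b) (habc : fuse a b - 1 ≤ c) :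
    fuse a (fuse b c) ≤ fuse (fuse a b) c := by
  simp only [fuse, Nat.max_def] at habc ⊢
  split_ifs at habc ⊢ <;> omega

lemma Admissible.cons_append_fuse {a b c : ℕ} {u t : List ℕ}
    (h : Admissible (a :: u ++ b :: c :: t)) : Admissible (a :: u ++ fuse b c :: t) := by
  induction u generalizing a with
  | nil =>
    simp only [List.cons_append, List.nil_append, admissible_cons_cons_iff] at h ⊢
    obtain ⟨hab, habc, h⟩ := h
    exact ⟨sub_one_le_fuse hab habc, h.of_cons_of_le (fuse_fuse_le hab habc)⟩
  | cons a' u ih =>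
    simp only [List.cons_append, admissible_cons_cons_iff] at h ⊢
    exact ⟨h.1, ih h.2⟩

theorem admissible_append_step (u v : List ℕ)
    (hz : Admissible (u ++ v)) :
    Admissible (u ++ stepWord v) := by
  match u, v with
  | [], b :: c :: t => exact ((admissible_cons_cons_iff b c t).1 hz).2
  | a :: u, b :: c :: t => exact Admissible.cons_append_fuse hz
  | _, [] | _, [_] => exact hz
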